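/- The algebra A_n = ⟨A_n; t⟩ is not solvable in dimension n: for every m ∈ ω, [1]_m^n ≠ 0 for the n-ary derived series defined by the n-ary term condition commutator. -/

import Mathlib

/-- The carrier of the algebra `𝔸ₙ = ⟨Aₙ; t⟩`: `O = {o_{i,g}ʲ}` (with
`g : (n-1) → 2`), `R = {rᵢʲ}`, and `G` the set of formal `n`-ary products,
so that `An.gg : Aₙⁿ → G` is a fixed injection `s`. -/
inductive An (n : ℕ) : Type where
  | o (i j : ℕ) (g : Fin (n - 1) → Bool) : An n
  | r (i j : ℕ) : An n
  | gg (a : Fin n → An n) : An n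

open Classical in
/-- The `n`-ary operation `t` of `𝔸ₙ`: on tuples `(r_{4i+ε₀}ʲ, …, r_{4i+ε_{n-1}}ʲ)`
with all `εₖ ∈ {0,2}` it equals `rᵢʲ⁺¹` if `ε₀ = ⋯ = ε_{n-2} = 2, ε_{n-1} = 0`;
`r_{i+1}ʲ⁺¹` if all `εₖ = 2`; and `o_{i,g}ʲ` with `g(k) = εₖ/2` otherwise.
On all other tuples it is the fixed injection `s` into `G`. -/
noncomputable def tOp (n : ℕ) (a : Fin n → An n) : An n :=
  if hpos : 0 < n then
    if h : ∃ p : ℕ × ℕ, ∀ k : Fin n,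
        a k = An.r (4 * p.1) p.2 ∨ a k = An.r (4 * p.1 + 2) p.2 then
      let i := h.choose.1
      let j := h.choose.2
      if ∀ k : Fin n, (k : ℕ) < n - 1 → a k = An.r (4 * i + 2) j then
        if a ⟨n - 1, by omega⟩ = An.r (4 * i) j then An.r i (j + 1)
        else An.r (i + 1) (j + 1)
      else
        An.o i j (fun k =>
          if a ⟨k.1, by have := k.isLt; omega⟩ = An.r (4 * i + 2) j then true
          else false)
    else An.gg a
  else An.gg a

/-- `x ∈ R`. -/
def An.inR {n : ℕ} (x : An n) : Prop := ∃ i j : ℕ, x = An.r i j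

/-- `x ∈ O`. -/
def An.inO {n : ℕ} (x : An n) : Prop := ∃ (i j : ℕ) (g : Fin (n - 1) → Bool), x = An.o i j g

/-- A congruence of `𝔸ₙ`: an equivalence relation compatible with `t`. -/
def IsConN (n : ℕ) (θ : An n → An n → Prop) : Prop :=
  Equivalence θ ∧
    ∀ x y : Fin n → An n, (∀ k, θ (x k) (y k)) → θ (tOp n x) (tOp n y)

/-- `M(θ₀,…,θ_{n-1})`: the subalgebra of `𝔸ₙ^(2ⁿ)` generated by the cubes
`γᵢⁿ(x,y)` for `(x,y) ∈ θᵢ`, `i ∈ n`. -/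
inductive MN (n : ℕ) (θ : Fin n → (An n → An n → Prop)) :
    ((Fin n → Bool) → An n) → Prop where
  | gen (i : Fin n) (x y : An n) (hxy : θ i x y) :
      MN n θ (fun f => if f i then y else x)
  | app (c : Fin n → (Fin n → Bool) → An n) (hc : ∀ k, MN n θ (c k)) :
      MN n θ (fun f => tOp n (fun k => c k f))

/-- Centrality: for every `h ∈ M(θ₀,…,θ_{n-1})`, if all `(n-1)`-support lines
of `h` are `δ`-pairs then so is the `(n-1)`-pivot line. -/
def CenN (n : ℕ) (hn : 0 < n) (θ : Fin n → (An n → An n → Prop))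
    (δ : An n → An n → Prop) : Prop :=
  ∀ h : (Fin n → Bool) → An n, MN n θ h →
    (∀ f : Fin n → Bool, (∃ k : Fin n, k ≠ ⟨n - 1, by omega⟩ ∧ f k = false) →
      δ (h (Function.update f ⟨n - 1, by omega⟩ false))
        (h (Function.update f ⟨n - 1, by omega⟩ true))) →
    δ (h (Function.update (fun _ => true) (⟨n - 1, by omega⟩ : Fin n) false))
      (h (fun _ => true))

/-- The `n`-ary term condition commutator: the least congruence `δ` such that
the centrality condition holds. -/
def commN (n : ℕ) (hn : 0 < n) (θ : Fin n → (An n → An n → Prop)) :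
    An n → An n → Prop :=
  fun a b => ∀ δ : An n → An n → Prop, IsConN n δ → CenN n hn θ δ → δ a b

/-- The `n`-ary derived series `[1]₀ⁿ = 1`, `[1]_{j+1}ⁿ = [[1]_jⁿ,…,[1]_jⁿ]`. -/
def dserN (n : ℕ) (hn : 0 < n) : ℕ → An n → An n → Prop
  | 0 => fun _ _ => True
  | j + 1 => commN n hn (fun _ => dserN n hn j)

/-!
Every term `[1]_m` of the derived series links all of `Rᵐ = {rᵢᵐ}`. Given this for `m`, apply `t`
to the generators `γₖ(r_{4i}ᵐ, r_{4i+2}ᵐ)` of `M([1]_m, …, [1]_m)`. On a corner with some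
`εₖ = 0` for `k < n - 1`, the operation lands in `O` at a label that ignores `ε_{n-1}`, so every
support line is constant; the pivot line is `(rᵢᵐ⁺¹, r_{i+1}ᵐ⁺¹)`. Hence every congruence
centralizing `M` links `rᵢᵐ⁺¹` with `r_{i+1}ᵐ⁺¹`, and by transitivity all of `Rᵐ⁺¹`.
-/

theorem Equivalence.rel_of_forall_rel_succ {α : Type*} {r : α → α → Prop} (hr : Equivalence r)
    {u : ℕ → α} (hu : ∀ i, r (u i) (u (i + 1))) (i i' : ℕ) : r (u i) (u i') := by
  have hbase : ∀ i, r (u 0) (u i) := fun i => by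
    induction i with
    | zero => exact hr.refl _
    | succ i ih => exact hr.trans ih (hu i)
  exact hr.trans (hr.symm (hbase i)) (hbase i')

lemma commN_equivalence (n : ℕ) (hn : 0 < n) (θ : Fin n → (An n → An n → Prop)) :
    Equivalence (commN n hn θ) where
  refl _ _ hδ _ := hδ.1.refl _
  symm hab δ hδ hcen := hδ.1.symm (hab δ hδ hcen)
  trans hab hbc δ hδ hcen := hδ.1.trans (hab δ hδ hcen) (hbc δ hδ hcen)

def rTuple (n i j : ℕ) (f : Fin n → Bool) : Fin n → An n :=
  fun k => if f k then An.r (4 * i + 2) j else An.r (4 * i) j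

lemma tOp_rTuple {n : ℕ} (hn : 0 < n) (i j : ℕ) (f : Fin n → Bool) :
    tOp n (rTuple n i j f) =
      if ∀ k : Fin n, (k : ℕ) < n - 1 → f k = true then
        (if f ⟨n - 1, by omega⟩ then An.r (i + 1) (j + 1) else An.r i (j + 1))
      else An.o i j (fun k => f (Fin.castLE (Nat.sub_le n 1) k)) := by
  have hmem : ∀ k, rTuple n i j f k = An.r (4 * i) j ∨ rTuple n i j f k = An.r (4 * i + 2) j :=
    fun k => by unfold rTuple; split <;> simp
  have hex : ∃ p : ℕ × ℕ, ∀ k : Fin n, rTuple n i j f k = An.r (4 * p.1) p.2 ∨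
      rTuple n i j f k = An.r (4 * p.1 + 2) p.2 := ⟨(i, j), hmem⟩
  have hchoose : hex.choose = (i, j) := by
    have h0 := hex.choose_spec ⟨0, hn⟩
    generalize hex.choose = p at h0
    rcases hmem ⟨0, hn⟩ with h | h <;> rw [h] at h0 <;> rcases h0 with h0 | h0 <;>
      simp only [An.r.injEq] at h0 <;> ext <;> omega
  have hne : (An.r (4 * i + 2) j : An n) ≠ An.r (4 * i) j := by simp
  unfold tOp
  rw [dif_pos hn, dif_pos hex, hchoose]
  cases hlast : f ⟨n - 1, by omega⟩ <;> simp [rTuple, hne.symm, hlast] <;> rfl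

lemma commN_r_succ {n : ℕ} (hn : 0 < n) {θ : Fin n → (An n → An n → Prop)} {i j : ℕ}
    (hθ : ∀ k, θ k (An.r (4 * i) j) (An.r (4 * i + 2) j)) :
    commN n hn θ (An.r i (j + 1)) (An.r (i + 1) (j + 1)) := by
  intro δ hδ hcen
  set last : Fin n := ⟨n - 1, by omega⟩
  have hlast : ∀ k : Fin n, k ≠ last ↔ (k : ℕ) < n - 1 := fun k => by
    rw [Ne, Fin.ext_iff, show (last : ℕ) = n - 1 from rfl]; omega
  have hcube : MN n θ (fun f => tOp n (rTuple n i j f)) :=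
    MN.app _ fun k => MN.gen k _ _ (hθ k)
  have hpivot : tOp n (rTuple n i j (Function.update (fun _ => true) last false)) =
      An.r i (j + 1) := by
    rw [tOp_rTuple hn, if_pos fun k hk => by simp [Function.update_of_ne ((hlast k).2 hk)]]
    simp [last]
  have htop : tOp n (rTuple n i j fun _ => true) = An.r (i + 1) (j + 1) := by
    simp [tOp_rTuple hn]
  have hsupport : ∀ f : Fin n → Bool, (∃ k, k ≠ last ∧ f k = false) → ∀ b b',
      tOp n (rTuple n i j (Function.update f last b)) =
        tOp n (rTuple n i j (Function.update f last b')) := by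
    rintro f ⟨k, hk, hfk⟩ b b'
    have hnot : ∀ b, ¬ ∀ k' : Fin n, (k' : ℕ) < n - 1 → Function.update f last b k' = true :=
      fun b h => by simpa [Function.update_of_ne hk, hfk] using h k ((hlast k).1 hk)
    rw [tOp_rTuple hn, tOp_rTuple hn, if_neg (hnot b), if_neg (hnot b')]
    congr 1
    funext k'
    rw [Function.update_of_ne, Function.update_of_ne] <;> simp [hlast]
  have := hcen _ hcube fun f hf => by
    rw [hsupport f hf false true]; exact hδ.1.refl _
  rwa [hpivot, htop] at this

lemma dserN_r_r {n : ℕ} (hn : 0 < n) (m i i' : ℕ) : dserN n hn m (An.r i m) (An.r i' m) := by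
  induction m generalizing i i' with
  | zero => trivial
  | succ m ih =>
    exact (commN_equivalence n hn _).rel_of_forall_rel_succ (u := fun i => An.r i (m + 1))
      (fun i => commN_r_succ hn fun _ => ih _ _) i i'

/-- `𝔸ₙ` is not solvable in dimension `n`: no term of the `n`-ary derived
series is the trivial (equality) congruence. -/
theorem stmt12 (n : ℕ) (hn : 2 ≤ n) :
    ∀ m : ℕ, ¬ (∀ a b : An n, dserN n (by omega) m a b → a = b) := by
  intro m htriv
  simpa using htriv _ _ (dserN_r_r _ m 0 1)
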